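/- Let D, w*, γ, η be as in the margin-RCN model, let N, T ∈ ℕ, let μ = 2/((1−η)·√(T+1)), and run projected subgradient descent on ĝ_N starting from any w₀ in the unit ball. Then, for every realization of the sample, there exists t ∈ {0, …, T} such that Pr_{x∼D_x}[sign(w_t·x) ≠ sign(w*·x)] ≤ E₁ + E₂ + E₃, where E₁ = 2(1−η)/((1−2η)·γ·√(T+1)), E₂ = (2/((1−2η)·γ))·‖ĝ_N(w*)‖₂, and E₃ = (1/(T+1))·Σ_{t=0}^{T} ( Pr_{x∼D_x}[sign(w_t·x) ≠ sign(w*·x)] − P̂_N(w_t) ). -/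

import Mathlib

open scoped RealInnerProductSpace
open MeasureTheory

/-- `sign(t) = 1` if `t ≥ 0` and `-1` otherwise. -/
noncomputable def sgn (t : ℝ) : ℝ := if 0 ≤ t then 1 else -1

/-- Euclidean projection onto the closed unit ball. -/
noncomputable def projB {d : ℕ} (v : EuclideanSpace ℝ (Fin d)) : EuclideanSpace ℝ (Fin d) :=
  if ‖v‖ ≤ 1 then v else ‖v‖⁻¹ • v

/-- Empirical subgradient `ĝ_N(w) = (1/(2N))·Σᵢ ((1−2η)·sign(w·x⁽ⁱ⁾) − y⁽ⁱ⁾)·x⁽ⁱ⁾`. -/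
noncomputable def hatg {d N : ℕ} (η : ℝ) (S : Fin N → EuclideanSpace ℝ (Fin d) × ℝ)
    (w : EuclideanSpace ℝ (Fin d)) : EuclideanSpace ℝ (Fin d) :=
  (1 / (2 * N) : ℝ) • ∑ i, ((1 - 2 * η) * sgn ⟪w, (S i).1⟫ - (S i).2) • (S i).1

/-- Empirical disagreement `P̂_N(w) = (1/N)·Σᵢ 1{sign(w·x⁽ⁱ⁾) ≠ sign(w*·x⁽ⁱ⁾)}`. -/
noncomputable def hatP {d N : ℕ} (wstar : EuclideanSpace ℝ (Fin d))
    (S : Fin N → EuclideanSpace ℝ (Fin d) × ℝ) (w : EuclideanSpace ℝ (Fin d)) : ℝ :=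
  (1 / N : ℝ) * ∑ i, if sgn ⟪w, (S i).1⟫ ≠ sgn ⟪wstar, (S i).1⟫ then 1 else 0

/-- Disagreement probability `Pr_{x∼D_x}[sign(w·x) ≠ sign(w*·x)]`. -/
noncomputable def disag {d : ℕ} (Dx : Measure (EuclideanSpace ℝ (Fin d)))
    (wstar w : EuclideanSpace ℝ (Fin d)) : ℝ :=
  (Dx {x | sgn ⟪w, x⟫ ≠ sgn ⟪wstar, x⟫}).toReal

/-!
The sign part of `ĝ_N` is monotone, and the margin makes it strictly so on the sample:
`⟪ĝ_N(w) - ĝ_N(w*), w - w*⟫ ≥ (1-2η) γ P̂_N(w)`, since every sample point on which `w` and `w*`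
disagree contributes `(1-2η)/(2N) · 2γ`. Projected subgradient descent with `‖ĝ_N‖ ≤ 1-η` on a
ball of diameter `2` keeps the average of `⟪ĝ_N(w_t), w_t - w*⟫` below `2(1-η)/√(T+1)`, and
`⟪ĝ_N(w*), w_t - w*⟫ ≥ -2‖ĝ_N(w*)‖`; so the average empirical disagreement is at most `E₁ + E₂`.
The best iterate has population disagreement at most the average, which exceeds the empirical
average by exactly `E₃`.
-/

lemma abs_sgn (t : ℝ) : |sgn t| = 1 := by
  unfold sgn; split_ifs <;> simp

lemma ite_sgn_ne_le_sgn_sub_mul_sub {γ a b : ℝ} (hb : γ ≤ |b|) :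
    (if sgn a ≠ sgn b then 2 * γ else 0) ≤ (sgn a - sgn b) * (a - b) := by
  unfold sgn
  split_ifs <;> simp only [ne_eq, not_true_eq_false] at * <;> cases abs_cases b <;> nlinarith

lemma norm_projB_le_one {d : ℕ} (v : EuclideanSpace ℝ (Fin d)) : ‖projB v‖ ≤ 1 := by
  unfold projB
  split_ifs with hv
  · exact hv
  · rw [norm_smul, norm_inv, norm_norm, inv_mul_cancel₀ (by linarith)]

lemma norm_projB_sub_le {d : ℕ} (v : EuclideanSpace ℝ (Fin d)) {u : EuclideanSpace ℝ (Fin d)}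
    (hu : ‖u‖ ≤ 1) : ‖projB v - u‖ ≤ ‖v - u‖ := by
  unfold projB
  split_ifs with hv
  · exact le_rfl
  push Not at hv
  set v' := ‖v‖⁻¹ • v
  have hv' : ‖v'‖ = 1 := norm_smul_inv_norm (by rintro rfl; norm_num at hv)
  have hsplit : v - u = (‖v‖ - 1) • v' + (v' - u) := by
    rw [sub_smul, one_smul, smul_inv_smul₀ (by positivity)]
    abel
  -- `v - v'` is a positive multiple of `v'` and `⟪v', u⟫ ≤ 1`, so the angle at `v'` is obtuse.
  have hobtuse : 0 ≤ ⟪(‖v‖ - 1) • v', v' - u⟫ := by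
    rw [real_inner_smul_left, inner_sub_right, real_inner_self_eq_norm_sq, hv']
    have hvu : ⟪v', u⟫ ≤ 1 := (real_inner_le_norm v' u).trans (by rw [hv', one_mul]; exact hu)
    exact mul_nonneg (by linarith) (by linarith)
  rw [← sq_le_sq₀ (norm_nonneg _) (norm_nonneg _), hsplit, norm_add_sq_real]
  nlinarith [sq_nonneg ‖(‖v‖ - 1) • v'‖]

section ProjectedDescent

variable {E : Type*} [NormedAddCommGroup E] [InnerProductSpace ℝ E]
  {P : E → E} {u : E} {w g : ℕ → E} {μ G R : ℝ}

lemma norm_sub_sq_le_of_projected_step (hP : ∀ v, ‖P v - u‖ ≤ ‖v - u‖)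
    (hstep : ∀ s, w (s + 1) = P (w s - μ • g s)) (hg : ∀ s, ‖g s‖ ≤ G) (s : ℕ) :
    ‖w (s + 1) - u‖ ^ 2 ≤ ‖w s - u‖ ^ 2 - 2 * μ * ⟪g s, w s - u⟫ + μ ^ 2 * G ^ 2 := by
  have hproj : ‖w (s + 1) - u‖ ^ 2 ≤ ‖(w s - u) - μ • g s‖ ^ 2 := by
    rw [hstep, sub_right_comm]
    exact pow_le_pow_left₀ (norm_nonneg _) (hP _) 2
  have hexpand : ‖(w s - u) - μ • g s‖ ^ 2
      = ‖w s - u‖ ^ 2 - 2 * μ * ⟪g s, w s - u⟫ + μ ^ 2 * ‖g s‖ ^ 2 := by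
    rw [norm_sub_sq_real, real_inner_smul_right, norm_smul, mul_pow, Real.norm_eq_abs, sq_abs,
      real_inner_comm]
    ring
  have hg2 : ‖g s‖ ^ 2 ≤ G ^ 2 := pow_le_pow_left₀ (norm_nonneg _) (hg s) 2
  nlinarith [sq_nonneg μ]

lemma two_mul_sum_inner_le_of_projected_steps (hP : ∀ v, ‖P v - u‖ ≤ ‖v - u‖)
    (hstep : ∀ s, w (s + 1) = P (w s - μ • g s)) (hg : ∀ s, ‖g s‖ ≤ G) (hR : ‖w 0 - u‖ ≤ R)
    (T : ℕ) : 2 * μ * ∑ s ∈ Finset.range T, ⟪g s, w s - u⟫ ≤ R ^ 2 + T * μ ^ 2 * G ^ 2 := by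
  have hR2 : ‖w 0 - u‖ ^ 2 ≤ R ^ 2 := pow_le_pow_left₀ (norm_nonneg _) hR 2
  calc 2 * μ * ∑ s ∈ Finset.range T, ⟪g s, w s - u⟫
      ≤ ∑ s ∈ Finset.range T, ((‖w s - u‖ ^ 2 - ‖w (s + 1) - u‖ ^ 2) + μ ^ 2 * G ^ 2) := by
        rw [Finset.mul_sum]
        gcongr with s
        linarith [norm_sub_sq_le_of_projected_step hP hstep hg s]
    _ = ‖w 0 - u‖ ^ 2 - ‖w T - u‖ ^ 2 + T * μ ^ 2 * G ^ 2 := by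
        rw [Finset.sum_add_distrib, Finset.sum_range_sub' (fun s => ‖w s - u‖ ^ 2),
          Finset.sum_const, Finset.card_range, nsmul_eq_mul]
        ring
    _ ≤ R ^ 2 + T * μ ^ 2 * G ^ 2 := by nlinarith [sq_nonneg ‖w T - u‖]

lemma sum_inner_le_mul_sqrt_of_projected_steps (hP : ∀ v, ‖P v - u‖ ≤ ‖v - u‖)
    (hstep : ∀ s, w (s + 1) = P (w s - μ • g s)) (hg : ∀ s, ‖g s‖ ≤ G) (hR : ‖w 0 - u‖ ≤ R)
    (hG : 0 < G) (hR0 : 0 < R) (T : ℕ) (hμ : μ = R / (G * Real.sqrt (T + 1))) :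
    ∑ s ∈ Finset.range (T + 1), ⟪g s, w s - u⟫ ≤ R * G * Real.sqrt (T + 1) := by
  set q := Real.sqrt (T + 1)
  have hq : 0 < q := Real.sqrt_pos.2 (by positivity)
  have hq2 : q ^ 2 = T + 1 := Real.sq_sqrt (by positivity)
  have hμq : μ * G * q = R := by rw [hμ]; field_simp
  have hμ0 : 0 < μ := by rw [hμ]; positivity
  have hsum := two_mul_sum_inner_le_of_projected_steps hP hstep hg hR (T + 1)
  push_cast at hsum
  refine le_of_mul_le_mul_left (a := 2 * μ) ?_ (by positivity)
  calc 2 * μ * ∑ s ∈ Finset.range (T + 1), ⟪g s, w s - u⟫ ≤ R ^ 2 + (T + 1) * μ ^ 2 * G ^ 2 := hsum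
    _ = 2 * μ * (R * G * q) := by rw [← hq2, ← hμq]; ring

end ProjectedDescent

section Subgradient

variable {d N : ℕ} (S : Fin N → EuclideanSpace ℝ (Fin d) × ℝ)

lemma norm_hatg_le {η : ℝ} (hη : η ≤ 1 / 2) (hSx : ∀ i, ‖(S i).1‖ ≤ 1)
    (hSy : ∀ i, |(S i).2| ≤ 1) (w : EuclideanSpace ℝ (Fin d)) : ‖hatg η S w‖ ≤ 1 - η := by
  have hterm : ∀ i, ‖((1 - 2 * η) * sgn ⟪w, (S i).1⟫ - (S i).2) • (S i).1‖ ≤ 2 * (1 - η) := by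
    intro i
    have hcoef : |(1 - 2 * η) * sgn ⟪w, (S i).1⟫ - (S i).2| ≤ 2 * (1 - η) :=
      calc _ ≤ |(1 - 2 * η) * sgn ⟪w, (S i).1⟫| + |(S i).2| := abs_sub _ _
        _ ≤ (1 - 2 * η) + 1 := by
          rw [abs_mul, abs_sgn, mul_one, abs_of_nonneg (by linarith)]
          linarith [hSy i]
        _ = 2 * (1 - η) := by ring
    rw [norm_smul, Real.norm_eq_abs]
    simpa using mul_le_mul hcoef (hSx i) (norm_nonneg _) (by linarith)
  calc ‖hatg η S w‖ ≤ 1 / (2 * N) * (N * (2 * (1 - η))) := by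
        unfold hatg
        rw [norm_smul, Real.norm_eq_abs, abs_of_nonneg (by positivity)]
        gcongr
        simpa using (norm_sum_le Finset.univ _).trans (Finset.sum_le_sum fun i _ => hterm i)
    _ = (N / N) * (1 - η) := by ring
    _ ≤ 1 - η := mul_le_of_le_one_left (by linarith) (div_self_le_one (N : ℝ))

lemma inner_hatg_sub_hatg (η : ℝ) (w w' : EuclideanSpace ℝ (Fin d)) :
    ⟪hatg η S w - hatg η S w', w - w'⟫ = (1 - 2 * η) / (2 * N) *
      ∑ i, (sgn ⟪w, (S i).1⟫ - sgn ⟪w', (S i).1⟫) * (⟪w, (S i).1⟫ - ⟪w', (S i).1⟫) := by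
  unfold hatg
  rw [← smul_sub, ← Finset.sum_sub_distrib, real_inner_smul_left, sum_inner, Finset.mul_sum,
    Finset.mul_sum]
  refine Finset.sum_congr rfl fun i _ => ?_
  rw [← sub_smul, real_inner_smul_left, inner_sub_right, real_inner_comm w, real_inner_comm w']
  ring

lemma mul_hatP_le_inner_hatg_sub_hatg {γ η : ℝ} (hη : η ≤ 1 / 2)
    {wstar : EuclideanSpace ℝ (Fin d)} (hSm : ∀ i, γ ≤ |⟪wstar, (S i).1⟫|)
    (w : EuclideanSpace ℝ (Fin d)) :
    (1 - 2 * η) * γ * hatP wstar S w ≤ ⟪hatg η S w - hatg η S wstar, w - wstar⟫ := by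
  have hite : ∀ i, (if sgn ⟪w, (S i).1⟫ ≠ sgn ⟪wstar, (S i).1⟫ then 2 * γ else 0)
      = 2 * γ * (if sgn ⟪w, (S i).1⟫ ≠ sgn ⟪wstar, (S i).1⟫ then 1 else 0) := by
    intro i; split_ifs <;> simp
  rw [inner_hatg_sub_hatg]
  calc (1 - 2 * η) * γ * hatP wstar S w = (1 - 2 * η) / (2 * N) *
        ∑ i, if sgn ⟪w, (S i).1⟫ ≠ sgn ⟪wstar, (S i).1⟫ then 2 * γ else 0 := by
        simp only [hatP, hite, ← Finset.mul_sum]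
        ring
    _ ≤ _ := mul_le_mul_of_nonneg_left
        (Finset.sum_le_sum fun i _ => ite_sgn_ne_le_sgn_sub_mul_sub (hSm i))
        (div_nonneg (by linarith) (by positivity))

lemma mul_hatP_le_inner_hatg_add {γ η R : ℝ} (hη : η ≤ 1 / 2)
    {wstar : EuclideanSpace ℝ (Fin d)} (hSm : ∀ i, γ ≤ |⟪wstar, (S i).1⟫|)
    {w : EuclideanSpace ℝ (Fin d)} (hw : ‖w - wstar‖ ≤ R) :
    (1 - 2 * η) * γ * hatP wstar S w ≤ ⟪hatg η S w, w - wstar⟫ + R * ‖hatg η S wstar‖ := by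
  have hmono := mul_hatP_le_inner_hatg_sub_hatg S hη hSm w
  have hcross := (abs_real_inner_le_norm (hatg η S wstar) (w - wstar)).trans
    (mul_le_mul_of_nonneg_left hw (norm_nonneg _))
  rw [inner_sub_left] at hmono
  linarith [neg_abs_le ⟪hatg η S wstar, w - wstar⟫]

end Subgradient

lemma exists_le_average (a : ℕ → ℝ) (T : ℕ) :
    ∃ t ≤ T, a t ≤ 1 / (T + 1 : ℝ) * ∑ s ∈ Finset.range (T + 1), a s := by
  obtain ⟨t, ht, hle⟩ := Finset.exists_le_of_sum_le (Finset.nonempty_range_add_one (n := T))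
    (f := a) (g := fun _ => 1 / (T + 1 : ℝ) * ∑ s ∈ Finset.range (T + 1), a s) <| by
      rw [Finset.sum_const, Finset.card_range, nsmul_eq_mul]
      push_cast
      field_simp
      rfl
  exact ⟨t, Nat.lt_succ_iff.mp (Finset.mem_range.mp ht), hle⟩

theorem stmt_4_general {d : ℕ} (N T : ℕ) (γ η : ℝ)
    (hγ : γ ∈ Set.Ioo (0 : ℝ) 1) (hη : η ∈ Set.Ioo (0 : ℝ) (1 / 2))
    (wstar : EuclideanSpace ℝ (Fin d)) (hws : ‖wstar‖ = 1)
    (Dx : Measure (EuclideanSpace ℝ (Fin d)))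
    (S : Fin N → EuclideanSpace ℝ (Fin d) × ℝ)
    (hSx : ∀ i, ‖(S i).1‖ = 1)
    (hSy : ∀ i, (S i).2 = -1 ∨ (S i).2 = 1)
    (hSm : ∀ i, γ ≤ |⟪wstar, (S i).1⟫|)
    (μstep : ℝ) (hμ : μstep = 2 / ((1 - η) * Real.sqrt (T + 1)))
    (w : ℕ → EuclideanSpace ℝ (Fin d)) (hw0 : ‖w 0‖ ≤ 1)
    (hiter : ∀ s, w (s + 1) = projB (w s - μstep • hatg η S (w s))) :
    ∃ t ≤ T, disag Dx wstar (w t) ≤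
      2 * (1 - η) / ((1 - 2 * η) * γ * Real.sqrt (T + 1)) +
      (2 / ((1 - 2 * η) * γ)) * ‖hatg η S wstar‖ +
      (1 / (T + 1 : ℝ)) *
        ∑ s ∈ Finset.range (T + 1), (disag Dx wstar (w s) - hatP wstar S (w s)) := by
  obtain ⟨hγ0, -⟩ := hγ
  obtain ⟨-, hη1⟩ := hη
  have hball : ∀ s, ‖w s‖ ≤ 1
    | 0 => hw0
    | s + 1 => hiter s ▸ norm_projB_le_one _
  have hdist : ∀ s, ‖w s - wstar‖ ≤ 2 := fun s =>
    (norm_sub_le _ _).trans (by linarith [hball s])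
  have hgrad : ∀ v, ‖hatg η S v‖ ≤ 1 - η := norm_hatg_le S hη1.le (fun i => (hSx i).le)
    (fun i => by rcases hSy i with h | h <;> simp [h])
  have hregret := sum_inner_le_mul_sqrt_of_projected_steps (fun v => norm_projB_sub_le v hws.le)
    hiter (fun s => hgrad (w s)) (hdist 0) (by linarith) two_pos T hμ
  have havg : 1 / (T + 1 : ℝ) * ∑ s ∈ Finset.range (T + 1), hatP wstar S (w s) ≤
      2 * (1 - η) / ((1 - 2 * η) * γ * Real.sqrt (T + 1)) +
      (2 / ((1 - 2 * η) * γ)) * ‖hatg η S wstar‖ := by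
    have hsum := Finset.sum_le_sum fun s (_ : s ∈ Finset.range (T + 1)) =>
      mul_hatP_le_inner_hatg_add S hη1.le hSm (hdist s)
    rw [← Finset.mul_sum, Finset.sum_add_distrib, Finset.sum_const, Finset.card_range,
      nsmul_eq_mul] at hsum
    push_cast at hsum
    set q := Real.sqrt (T + 1)
    have hq : 0 < q := Real.sqrt_pos.2 (by positivity)
    have hq2 : q ^ 2 = T + 1 := Real.sq_sqrt (by positivity)
    have hη2 : 0 < 1 - 2 * η := by linarith
    rw [← hq2] at hsum ⊢
    field_simp
    linarith
  obtain ⟨t, ht, hmin⟩ := exists_le_average (fun s => disag Dx wstar (w s)) T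
  refine ⟨t, ht, hmin.trans ?_⟩
  rw [Finset.sum_sub_distrib, mul_sub (1 / (T + 1 : ℝ))]
  linarith

theorem stmt_4 {d : ℕ} (N T : ℕ) (hN : 0 < N) (γ η : ℝ)
    (hγ : γ ∈ Set.Ioo (0 : ℝ) 1) (hη : η ∈ Set.Ioo (0 : ℝ) (1 / 2))
    (wstar : EuclideanSpace ℝ (Fin d)) (hws : ‖wstar‖ = 1)
    (Dx : Measure (EuclideanSpace ℝ (Fin d))) [IsProbabilityMeasure Dx]
    (hsph : ∀ᵐ x ∂Dx, ‖x‖ = 1)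
    (hmargin : Dx {x | |⟪wstar, x⟫| < γ} = 0)
    (S : Fin N → EuclideanSpace ℝ (Fin d) × ℝ)
    (hSx : ∀ i, ‖(S i).1‖ = 1)
    (hSy : ∀ i, (S i).2 = -1 ∨ (S i).2 = 1)
    (hSm : ∀ i, γ ≤ |⟪wstar, (S i).1⟫|)
    (μstep : ℝ) (hμ : μstep = 2 / ((1 - η) * Real.sqrt (T + 1)))
    (w : ℕ → EuclideanSpace ℝ (Fin d)) (hw0 : ‖w 0‖ ≤ 1)
    (hiter : ∀ s, w (s + 1) = projB (w s - μstep • hatg η S (w s))) :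
    ∃ t ≤ T, disag Dx wstar (w t) ≤
      2 * (1 - η) / ((1 - 2 * η) * γ * Real.sqrt (T + 1)) +
      (2 / ((1 - 2 * η) * γ)) * ‖hatg η S wstar‖ +
      (1 / (T + 1 : ℝ)) *
        ∑ s ∈ Finset.range (T + 1), (disag Dx wstar (w s) - hatP wstar S (w s)) :=
  stmt_4_general N T γ η hγ hη wstar hws Dx S hSx hSy hSm μstep hμ w hw0 hiter
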